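/- arXiv:1505.04487 — 5 statements merged into one kernel-verified Lean document; each statement's English description precedes it below -/
import Mathlib

section
/- Any mutation of a weak Hamiltonian of a cubic graph is again a weak Hamiltonian. -/
/-- The degree of a vertex, as the cardinality of its neighbor set. -/
noncomputable def SimpleGraph.deg {V : Type*} (G : SimpleGraph V) (v : V) : ℕ :=
  (G.neighborSet v).ncard

/-- A cubic graph: every vertex has degree exactly 3. -/
def SimpleGraph.IsCubic {V : Type*} (G : SimpleGraph V) : Prop :=
  ∀ v, G.deg v = 3

/-- A 2-factor of `G`: a (spanning) subgraph in which every vertex has degree 2. -/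
def SimpleGraph.IsTwoFactor {V : Type*} (G H : SimpleGraph V) : Prop :=
  H ≤ G ∧ ∀ v, H.deg v = 2

/-- A weak Hamiltonian of `G`: a 2-factor all of whose cycles (= connected
components, each of which is a cycle) have even length (= even vertex count). -/
def SimpleGraph.IsWeakHam {V : Type*} (G H : SimpleGraph V) : Prop :=
  G.IsTwoFactor H ∧ ∀ c : H.ConnectedComponent, Even (Nat.card c.supp)

/-- `F` is a perfect matching (1-factor) contained in `H`: every vertex has
`F`-degree exactly 1. -/
def SimpleGraph.IsPM {V : Type*} (H F : SimpleGraph V) : Prop :=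
  F ≤ H ∧ ∀ v, F.deg v = 1

/-- `M` is a mutation of the weak Hamiltonian `H` of `G`: the union of the
complementary perfect matching `G \ H` with a perfect matching `F` chosen
inside `H` (i.e. a choice of alternating edges on each cycle of `H`). -/
def SimpleGraph.IsMutation {V : Type*} (G H M : SimpleGraph V) : Prop :=
  ∃ F : SimpleGraph V, H.IsPM F ∧ M = (G \ H) ⊔ F

/-- Any mutation of a weak Hamiltonian of a cubic graph is again a weak
Hamiltonian. -/
theorem mutation_isWeakHam {V : Type*} [Fintype V] (G H M : SimpleGraph V)
    (hG : G.IsCubic) (hH : G.IsWeakHam H) (hM : G.IsMutation H M) :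
    G.IsWeakHam M := by
  classical
  obtain ⟨F, ⟨hFH, hFdeg⟩, rfl⟩ := hM
  obtain ⟨⟨hHG, hHdeg⟩, -⟩ := hH
  set K := G \ H with hK
  -- neighbor set identities
  have hKn : ∀ v, K.neighborSet v = G.neighborSet v \ H.neighborSet v := by
    intro v; ext w; simp [hK, SimpleGraph.neighborSet]
  have hKdeg : ∀ v, K.deg v = 1 := by
    intro v
    have hsub : H.neighborSet v ⊆ G.neighborSet v := fun w hw => hHG hw
    have := Set.ncard_diff hsub (Set.toFinite _)
    rw [SimpleGraph.deg, hKn v, this]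
    have h1 := hG v
    have h2 := hHdeg v
    rw [SimpleGraph.deg] at h1 h2
    omega
  have hdisj : ∀ v, Disjoint (K.neighborSet v) (F.neighborSet v) := by
    intro v
    rw [Set.disjoint_left]
    intro w hwK hwF
    rw [hKn v] at hwK
    exact hwK.2 (hFH hwF)
  have hMn : ∀ v, (K ⊔ F).neighborSet v = K.neighborSet v ∪ F.neighborSet v := by
    intro v; ext w; simp [SimpleGraph.neighborSet]
  have hMdeg : ∀ v, (K ⊔ F).deg v = 2 := by
    intro v
    rw [SimpleGraph.deg, hMn v,
      Set.ncard_union_eq (hdisj v) (Set.toFinite _) (Set.toFinite _),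
      show (K.neighborSet v).ncard = K.deg v from rfl]
    have := hFdeg v
    rw [SimpleGraph.deg] at this
    rw [hKdeg v, this]
  have hMG : K ⊔ F ≤ G := sup_le sdiff_le (hFH.trans hHG)
  refine ⟨⟨hMG, hMdeg⟩, ?_⟩
  -- evenness via the perfect matching K inside K ⊔ F
  have hKM : K ≤ K ⊔ F := le_sup_left
  have hpm : ((K ⊔ F).toSubgraph K hKM).IsPerfectMatching := by
    rw [SimpleGraph.Subgraph.isPerfectMatching_iff]
    intro v
    obtain ⟨w, hw⟩ := Set.ncard_eq_one.mp (hKdeg v)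
    refine ⟨w, ?_, fun y hy => ?_⟩
    · show K.Adj v w
      have : w ∈ K.neighborSet v := hw ▸ rfl
      exact this
    · have : y ∈ K.neighborSet v := hy
      rwa [hw, Set.mem_singleton_iff] at this
  intro c
  have := c.even_card_of_isPerfectMatching hpm
  simpa [Nat.card_eq_fintype_card] using this
end

section
/- Mutation is a symmetric relation: if a weak Hamiltonian H of a cubic graph G can mutate to H', then H' can mutate to H. -/
/-- Mutation is symmetric: if the weak Hamiltonian `H` of a cubic graph `G`
mutates to `M`, then `M` mutates to `H`. -/
theorem mutation_symm {V : Type*} [Fintype V] (G H M : SimpleGraph V)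
    (hG : G.IsCubic) (hH : G.IsWeakHam H) (hM : G.IsMutation H M) :
    G.IsMutation M H := by
  obtain ⟨F, ⟨hFH, hFdeg⟩, rfl⟩ := hM
  obtain ⟨⟨hHG, _⟩, _⟩ := hH
  refine ⟨F, ⟨le_sup_right, hFdeg⟩, ?_⟩
  ext a b
  have h1 := @hHG a b
  have h2 := @hFH a b
  simp only [SimpleGraph.sdiff_adj, SimpleGraph.sup_adj] at *
  tauto
end

section
/- If H and H' are weak Hamiltonians of a cubic graph G related by a mutation, then the symmetric difference H Δ H' (viewed as elements of F_2^{E(G)}) equals the edge set of a third weak Hamiltonian H'' which is related by a mutation to both H and H'; equivalently H + H' + H'' = 0 in F_2^{E(G)}. -/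
section Aux
open SimpleGraph
set_option linter.unusedSectionVars false
variable {V : Type*} [Fintype V]

lemma even_card_of_fpf {α : Type*} [Fintype α] (g : α → α) (h1 : ∀ a, g (g a) = a)
    (h2 : ∀ a, g a ≠ a) : Even (Fintype.card α) := by
  have hsum : ∑ _x : α, (1 : ZMod 2) = 0 :=
    Finset.sum_ninvolution g (fun a => by decide) (fun a _ => h2 a)
      (fun a => Finset.mem_univ _) h1
  have : ((Fintype.card α : ℕ) : ZMod 2) = 0 := by
    rw [Finset.sum_const, Finset.card_univ, nsmul_eq_mul, mul_one] at hsum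
    exact hsum
  have := (ZMod.natCast_eq_zero_iff _ 2).mp this
  exact even_iff_two_dvd.mpr this

lemma nbhd_sdiff (G H : SimpleGraph V) (v : V) :
    (G \ H).neighborSet v = G.neighborSet v \ H.neighborSet v := by
  ext w; simp [mem_neighborSet]

lemma nbhd_sup (G H : SimpleGraph V) (v : V) :
    (G ⊔ H).neighborSet v = G.neighborSet v ∪ H.neighborSet v := by
  ext w; simp [mem_neighborSet]

lemma deg_sdiff {G H : SimpleGraph V} (h : H ≤ G) (v : V) :
    (G \ H).deg v = G.deg v - H.deg v := by
  have hsub : H.neighborSet v ⊆ G.neighborSet v := fun w hw => h hw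
  rw [SimpleGraph.deg, nbhd_sdiff, Set.ncard_diff hsub (Set.toFinite _)]
  rfl

/-- components of a graph containing a perfect matching have even support. -/
lemma even_supp_of_pm (K F : SimpleGraph V) (hle : F ≤ K) (hdeg : ∀ v, F.deg v = 1)
    (c : K.ConnectedComponent) : Even (Nat.card c.supp) := by
  classical
  have hex : ∀ v, ∃ w, F.neighborSet v = {w} := fun v => Set.ncard_eq_one.mp (hdeg v)
  choose σ hσ using hex
  have hadj : ∀ v, F.Adj v (σ v) := fun v => by
    have : σ v ∈ F.neighborSet v := by rw [hσ v]; rfl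
    exact this
  have hinv : ∀ v, σ (σ v) = v := fun v => by
    have : v ∈ F.neighborSet (σ v) := (hadj v).symm
    rw [hσ (σ v)] at this
    exact this.symm
  have hne : ∀ v, σ v ≠ v := fun v h => F.irrefl (h ▸ hadj v)
  -- σ restricts to c.supp
  have hmem : ∀ v ∈ c.supp, σ v ∈ c.supp := by
    intro v hv
    simp only [ConnectedComponent.mem_supp_iff] at hv ⊢
    rw [← hv]
    exact ConnectedComponent.sound (Adj.reachable (hle (hadj v))).symm
  have : Even (Fintype.card c.supp) := by
    refine even_card_of_fpf (fun x => ⟨σ x.1, hmem x.1 x.2⟩) ?_ ?_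
    · intro a; ext; exact hinv a.1
    · intro a h; exact hne a.1 (congrArg Subtype.val h)
  simpa [Nat.card_eq_fintype_card] using this

lemma deg_sup_of_disjoint (A B : SimpleGraph V) (hd : A ⊓ B = ⊥) (v : V) :
    (A ⊔ B).deg v = A.deg v + B.deg v := by
  have hdis : Disjoint (A.neighborSet v) (B.neighborSet v) := by
    rw [Set.disjoint_left]
    intro w hA hB
    have : (A ⊓ B).Adj v w := ⟨hA, hB⟩
    rw [hd] at this
    exact this
  rw [SimpleGraph.deg, nbhd_sup, Set.ncard_union_eq hdis (Set.toFinite _) (Set.toFinite _)]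
  rfl

end Aux

/-- If weak Hamiltonians `H`, `H'` of a cubic graph are related by a mutation,
then their symmetric difference (as elements of `𝔽₂^E`) is the edge set of a
third weak Hamiltonian `H''`, related by a mutation to both; equivalently
`H + H' + H'' = 0` in `𝔽₂^E`, i.e. `H'' = H Δ H'`. -/
theorem mutation_third_weakHam {V : Type*} [Fintype V] (G H H' : SimpleGraph V)
    (hG : G.IsCubic) (hH : G.IsWeakHam H) (hH' : G.IsWeakHam H')
    (hmut : G.IsMutation H H') :
    ∃ H'' : SimpleGraph V, G.IsWeakHam H'' ∧ G.IsMutation H H'' ∧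
      G.IsMutation H' H'' ∧ H'' = symmDiff H H' := by
  obtain ⟨F, ⟨hFH, hFdeg⟩, hH'eq⟩ := hmut
  obtain ⟨⟨hHG, hHdeg⟩, -⟩ := hH
  have hFG : F ≤ G := le_trans hFH hHG
  -- adjacency implications for tauto
  have iFH : ∀ a b, F.Adj a b → H.Adj a b := fun a b h => hFH h
  have iHG : ∀ a b, H.Adj a b → G.Adj a b := fun a b h => hHG h
  -- degree facts
  have dGH : ∀ v, (G \ H).deg v = 1 := by
    intro v; rw [deg_sdiff hHG, hG v, hHdeg v]
  have dHF : ∀ v, (H \ F).deg v = 1 := by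
    intro v; rw [deg_sdiff hFH, hHdeg v, hFdeg v]
  have hdisj : (G \ H) ⊓ (H \ F) = ⊥ := by
    ext a b; simp only [SimpleGraph.inf_adj, SimpleGraph.sdiff_adj,
      SimpleGraph.bot_adj]; tauto
  refine ⟨(G \ H) ⊔ (H \ F), ⟨⟨sup_le sdiff_le (le_trans sdiff_le hHG), ?_⟩, ?_⟩,
    ⟨H \ F, ⟨sdiff_le, dHF⟩, rfl⟩, ⟨G \ H, ⟨?_, dGH⟩, ?_⟩, ?_⟩
  · intro v
    rw [deg_sup_of_disjoint _ _ hdisj, dGH v, dHF v]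
  · exact even_supp_of_pm _ (H \ F) le_sup_right dHF
  · rw [hH'eq]; exact le_sup_left
  · have key : G \ H' = H \ F := by
      subst hH'eq
      ext a b
      have h1 := iFH a b
      have h2 := iHG a b
      simp only [SimpleGraph.sdiff_adj, SimpleGraph.sup_adj]
      tauto
    rw [key, sup_comm]
  · subst hH'eq
    ext a b
    have h1 := iFH a b
    have h2 := iHG a b
    simp only [symmDiff_def, SimpleGraph.sup_adj, SimpleGraph.sdiff_adj]
    tauto
end

section
/- All bridgeless planar maps are 4-face-colorable if and only if all bridgeless planar cubic maps are 4-face-colorable. -/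
/-- A (finite, oriented) combinatorial map: a finite set of darts `D`, the
rotation `σ` giving the cyclic order of darts around each vertex, and the
fixed-point-free involution `α` exchanging the two darts of each edge.
Vertices are the cycles of `σ`, edges the cycles of `α`, and faces the cycles
of `σ * α`. -/
structure CombMap where
  D : Type
  [fintypeD : Fintype D]
  σ : Equiv.Perm D
  α : Equiv.Perm D
  α_invol : ∀ d, α (α d) = d
  α_ne : ∀ d, α d ≠ d

attribute [instance] CombMap.fintypeD

/-- The setoid on darts whose classes are the cycles of a permutation. -/
def permSetoid {D : Type*} (f : Equiv.Perm D) : Setoid D :=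
  ⟨f.SameCycle, ⟨fun _ => Equiv.Perm.SameCycle.refl f _,
    fun h => h.symm, fun h h' => h.trans h'⟩⟩

/-- The number of cycles (orbits) of a permutation. -/
noncomputable def numCycles {D : Type*} (f : Equiv.Perm D) : ℕ :=
  Nat.card (Quotient (permSetoid f))

namespace CombMap

variable (M : CombMap)

/-- The face permutation of a combinatorial map. -/
def φ : Equiv.Perm M.D := M.σ * M.α

/-- A combinatorial map is connected if any dart can be reached from any other
using `σ` and `α`. -/
def Connected : Prop :=
  ∀ a b : M.D, Relation.EqvGen (fun x y => y = M.σ x ∨ y = M.α x) a b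

/-- A combinatorial map is planar if it is connected and satisfies the Euler
relation `#vertices - #edges + #faces = 2` (genus 0). -/
def Planar : Prop :=
  M.Connected ∧ numCycles M.σ + numCycles M.φ = numCycles M.α + 2

/-- A combinatorial map is cubic if every vertex has exactly three darts. -/
def Cubic : Prop := ∀ d, M.σ (M.σ (M.σ d)) = d ∧ M.σ d ≠ d

/-- A connected plane map is bridgeless iff no edge has the same face on both
of its sides. -/
def Bridgeless : Prop := ∀ d, ¬ M.φ.SameCycle d (M.α d)

/-- A proper face coloring with colors in `C`: a function on darts that is
constant on faces (cycles of `φ`) and takes different values on the two sides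
of every edge. -/
def ProperFaceColoring {C : Type*} (Φ : M.D → C) : Prop :=
  (∀ d, Φ (M.φ d) = Φ d) ∧ ∀ d, Φ d ≠ Φ (M.α d)

/-- A map is 4-face-colorable if its faces admit a proper coloring by 4
colors. -/
def FourColorable : Prop := ∃ Φ : M.D → Fin 4, M.ProperFaceColoring Φ

/-- A set of darts closed under `α`, i.e. a set of edges. -/
def EdgeSet (S : Set M.D) : Prop := ∀ d, d ∈ S ↔ M.α d ∈ S

/-- The darts at the same vertex as `d`. -/
def vertexDarts (d : M.D) : Set M.D := {e | M.σ.SameCycle d e}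

/-- A 2-factor: a set of edges such that every vertex is incident to exactly
two of its darts. -/
def IsTwoFactorSet (S : Set M.D) : Prop :=
  M.EdgeSet S ∧ ∀ d, (M.vertexDarts d ∩ S).ncard = 2

/-- A weak Hamiltonian: a 2-factor all of whose cycles have even length,
i.e. the 2-factor admits a proper 2-coloring of its vertices (a union of
disjoint cycles is bipartite iff all its cycles are even). -/
def IsWeakHamSet (S : Set M.D) : Prop :=
  M.IsTwoFactorSet S ∧
  ∃ c : M.D → Bool, (∀ d, c (M.σ d) = c d) ∧ ∀ d ∈ S, c (M.α d) ≠ c d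

/-- A perfect matching contained in `S`: a set of edges of `S` with exactly
one dart at each vertex (on the cycles of a 2-factor `S`, this is a choice of
alternating edges on each cycle). -/
def IsMatchingSet (S F : Set M.D) : Prop :=
  F ⊆ S ∧ M.EdgeSet F ∧ ∀ d, (M.vertexDarts d ∩ F).ncard = 1

/-- `S'` is a mutation of the weak Hamiltonian `S`: the union of the
complementary perfect matching `Sᶜ` with a perfect matching chosen on the
cycles of `S`. -/
def MutationSet (S S' : Set M.D) : Prop :=
  ∃ F : Set M.D, M.IsMatchingSet S F ∧ S' = Sᶜ ∪ F

end CombMap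

/-! The resolution replaces every dart `d` of a map by three darts `(d, 0)`, `(d, 1)`, `(d, 2)`
forming a small triangle: `(d, 0)` lies on the original edge of `d`, and `(d, 1)`, `(σ d, 2)` are
the two sides of a new edge joining the corners of consecutive darts `d`, `σ d`. The result is
cubic, its vertices are the darts of the map, its edges are the old edges plus one per dart, and
its faces are the old faces plus one small face per vertex, so the Euler relation survives.
Its old faces still meet exactly along the old edges, so it stays bridgeless, and restricting a
face coloring of the resolution to the darts `(d, 0)` colors the original map. -/

namespace Equiv.Perm

variable {α β T : Type*}

theorem SameCycle.apply_eq_of_invariant [Finite α] {f : Perm α} {p : α → T}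
    (hp : ∀ x, p (f x) = p x) {x y : α} (h : f.SameCycle x y) : p x = p y := by
  obtain ⟨n, rfl⟩ := h.exists_nat_pow_eq
  clear h
  induction n with
  | zero => rfl
  | succ n ih => rw [pow_succ', mul_apply, hp, ih]

theorem SameCycle.map_of_semiconj [Finite α] {f : Perm α} {g : Perm β} {e : α → β}
    (he : Function.Semiconj e f g) {x y : α} (h : f.SameCycle x y) :
    g.SameCycle (e x) (e y) := by
  obtain ⟨n, rfl⟩ := h.exists_nat_pow_eq
  exact ⟨n, by rw [zpow_natCast, coe_pow, coe_pow, (he.iterate_right n).eq]⟩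

end Equiv.Perm

open Equiv Perm

theorem mk_permSetoid_eq_iff {α : Type*} {f : Perm α} {x y : α} :
    Quotient.mk (permSetoid f) x = Quotient.mk (permSetoid f) y ↔ f.SameCycle x y :=
  Quotient.eq

theorem numCycles_eq_card_of_section {α T : Type*} [Finite α] {f : Perm α} (p : α → T) (s : T → α)
    (hp : ∀ x, p (f x) = p x) (hps : ∀ t, p (s t) = t) (hsp : ∀ x, f.SameCycle (s (p x)) x) :
    numCycles f = Nat.card T :=
  Nat.card_congr
    { toFun := Quotient.lift p fun _ _ => SameCycle.apply_eq_of_invariant hp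
      invFun := fun t => Quotient.mk _ (s t)
      left_inv := Quotient.ind fun x => Quotient.sound (hsp x)
      right_inv := hps }

namespace CombMap

variable (M : CombMap)

theorem φ_α_apply (d : M.D) : M.φ (M.α d) = M.σ d := by
  simp [φ, M.α_invol]

def resolutionα (x : M.D × Fin 3) : M.D × Fin 3 :=
  if x.2 = 0 then (M.α x.1, 0) else if x.2 = 1 then (M.σ x.1, 2) else (M.σ.symm x.1, 1)

theorem resolutionα_involutive : Function.Involutive M.resolutionα := by
  rintro ⟨d, i⟩
  fin_cases i <;> simp [resolutionα, M.α_invol]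

-- An `abbrev`, so that the darts of the resolution are syntactically pairs for `simp`.
abbrev resolution : CombMap where
  D := M.D × Fin 3
  σ := prodCongr (Equiv.refl M.D) (finRotate 3)
  α := M.resolutionα_involutive.toPerm
  α_invol := M.resolutionα_involutive
  α_ne := by
    rintro ⟨d, i⟩ h
    fin_cases i <;> simp [resolutionα] at h
    exact M.α_ne d h

@[simp] theorem resolutionα_zero (d : M.D) : M.resolutionα (d, 0) = (M.α d, 0) := rfl
@[simp] theorem resolutionα_one (d : M.D) : M.resolutionα (d, 1) = (M.σ d, 2) := rfl
@[simp] theorem resolutionα_two (d : M.D) : M.resolutionα (d, 2) = (M.σ.symm d, 1) := rfl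

@[simp] theorem resolution_φ_zero (d : M.D) : M.resolution.φ (d, 0) = (M.α d, 1) := by
  simp [φ]

@[simp] theorem resolution_φ_one (d : M.D) : M.resolution.φ (d, 1) = (M.σ d, 0) := by
  simp [φ]

@[simp] theorem resolution_φ_two (d : M.D) : M.resolution.φ (d, 2) = (M.σ.symm d, 2) := by
  simp [φ]

theorem resolution_φ_φ_zero (d : M.D) : M.resolution.φ (M.resolution.φ (d, 0)) = (M.φ d, 0) := by
  rw [resolution_φ_zero, resolution_φ_one, ← φ_α_apply, α_invol]

theorem resolution_cubic : M.resolution.Cubic := by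
  rintro ⟨d, i⟩
  fin_cases i <;> simp

theorem resolution_connected (h : M.Connected) : M.resolution.Connected := by
  let R : M.resolution.D → M.resolution.D → Prop :=
    fun x y => y = M.resolution.σ x ∨ y = M.resolution.α x
  have E := Relation.EqvGen.is_equivalence R
  have hσ (x) : Relation.EqvGen R x (M.resolution.σ x) := .rel _ _ (.inl rfl)
  have hα (x) : Relation.EqvGen R x (M.resolution.α x) := .rel _ _ (.inr rfl)
  have corner (d : M.D) (i : Fin 3) : Relation.EqvGen R (d, 0) (d, i) := by
    fin_cases i
    · exact E.refl _
    · exact hσ (d, 0)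
    · exact E.trans (hσ (d, 0)) (hσ (d, 1))
  have base (a b : M.D) : Relation.EqvGen R (a, 0) (b, 0) := by
    induction h a b with
    | rel x y hxy =>
      rcases hxy with rfl | rfl
      · exact E.trans (E.trans (corner x 1) (hα (x, 1))) (E.symm (corner (M.σ x) 2))
      · exact hα (x, 0)
    | refl x => exact E.refl _
    | symm x y _ ih => exact E.symm ih
    | trans x y z _ _ ih₁ ih₂ => exact E.trans ih₁ ih₂
  rintro ⟨a, i⟩ ⟨b, j⟩
  exact E.trans (E.trans (E.symm (corner a i)) (base a b)) (corner b j)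

theorem semiconj_resolution_α : Function.Semiconj (·, (0 : Fin 3)) M.α M.resolution.α :=
  fun _ => rfl

theorem semiconj_resolution_φ_sq : Function.Semiconj (·, (0 : Fin 3)) M.φ ⇑(M.resolution.φ ^ 2) :=
  fun d => by rw [sq, mul_apply, resolution_φ_φ_zero]

theorem semiconj_resolution_φ : Function.Semiconj (·, (2 : Fin 3)) ⇑M.σ⁻¹ M.resolution.φ :=
  fun d => (M.resolution_φ_two d).symm

theorem numCycles_resolution_σ : numCycles M.resolution.σ = Nat.card M.D := by
  refine numCycles_eq_card_of_section Prod.fst (·, 0) (by simp) (fun _ => rfl) ?_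
  rintro ⟨d, i⟩
  fin_cases i
  · exact .rfl
  · exact ⟨1, by simp⟩
  · exact ⟨2, by simp [zpow_ofNat, sq, Perm.mul_apply]⟩

def resolutionEdge (x : M.resolution.D) : Quotient (permSetoid M.α) ⊕ M.D :=
  if x.2 = 0 then .inl (Quotient.mk _ x.1) else if x.2 = 1 then .inr x.1 else .inr (M.σ.symm x.1)

theorem numCycles_resolution_α : numCycles M.resolution.α = numCycles M.α + Nat.card M.D := by
  rw [numCycles_eq_card_of_section M.resolutionEdge (Sum.elim (·.out, 0) (·, 1)), Nat.card_sum]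
  · rfl
  · rintro ⟨d, i⟩
    fin_cases i <;> simp [resolutionEdge]
    exact mk_permSetoid_eq_iff.2 (sameCycle_apply_left.2 .rfl)
  · rintro (q | d) <;> simp [resolutionEdge]
  · rintro ⟨d, i⟩
    fin_cases i
    · exact SameCycle.map_of_semiconj M.semiconj_resolution_α
        (Quotient.mk_out (s := permSetoid M.α) d)
    · exact .rfl
    · exact ⟨1, by simp [resolutionEdge]⟩

def resolutionFace (x : M.resolution.D) : Quotient (permSetoid M.φ) ⊕ Quotient (permSetoid M.σ) :=
  if x.2 = 0 then .inl (Quotient.mk _ x.1)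
  else if x.2 = 1 then .inl (Quotient.mk _ (M.α x.1)) else .inr (Quotient.mk _ x.1)

theorem resolutionFace_φ : ∀ x, M.resolutionFace (M.resolution.φ x) = M.resolutionFace x
  | (d, 0) => by rw [resolution_φ_zero]; simp [resolutionFace, M.α_invol]
  | (d, 1) => by
    have : M.φ.SameCycle (M.σ d) (M.α d) := M.φ_α_apply d ▸ sameCycle_apply_left.2 .rfl
    rw [resolution_φ_one]
    simpa [resolutionFace, mk_permSetoid_eq_iff]
  | (d, 2) => by
    rw [resolution_φ_two]
    simpa [resolutionFace, mk_permSetoid_eq_iff] using sameCycle_symm_apply_left.2 .rfl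

theorem numCycles_resolution_φ : numCycles M.resolution.φ = numCycles M.φ + numCycles M.σ := by
  rw [numCycles_eq_card_of_section M.resolutionFace (Sum.elim (·.out, 0) (·.out, 2)), Nat.card_sum]
  · rfl
  · exact M.resolutionFace_φ
  · rintro (q | q) <;> simp [resolutionFace]
  · rintro ⟨d, i⟩
    match i with
    | 0 =>
      exact (SameCycle.map_of_semiconj M.semiconj_resolution_φ_sq
        (Quotient.mk_out (s := permSetoid M.φ) d)).of_pow
    | 1 =>
      refine (SameCycle.map_of_semiconj M.semiconj_resolution_φ_sq
        (Quotient.mk_out (s := permSetoid M.φ) (M.α d))).of_pow.trans ⟨1, ?_⟩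
      rw [zpow_one, resolution_φ_zero, M.α_invol]
    | 2 =>
      exact SameCycle.map_of_semiconj M.semiconj_resolution_φ
        (sameCycle_inv.2 (Quotient.mk_out (s := permSetoid M.σ) d))

theorem resolution_planar (h : M.Planar) : M.resolution.Planar := by
  refine ⟨M.resolution_connected h.1, ?_⟩
  rw [M.numCycles_resolution_σ, M.numCycles_resolution_α, M.numCycles_resolution_φ]
  linarith [h.2]

theorem resolution_bridgeless (h : M.Bridgeless) : M.resolution.Bridgeless := by
  intro x hx
  have := hx.apply_eq_of_invariant M.resolutionFace_φ
  obtain ⟨d, i⟩ := x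
  match i with
  | 0 => exact h d (mk_permSetoid_eq_iff.1 (by simpa [resolutionFace] using this))
  | 1 => simp [resolutionFace] at this
  | 2 => simp [resolutionFace] at this

theorem ProperFaceColoring.of_resolution {C : Type*} {Φ : M.resolution.D → C}
    (hΦ : M.resolution.ProperFaceColoring Φ) : M.ProperFaceColoring fun d => Φ (d, 0) := by
  refine ⟨fun d => ?_, fun d => hΦ.2 (d, 0)⟩
  change Φ (M.φ d, 0) = Φ (d, 0)
  rw [← M.resolution_φ_φ_zero, hΦ.1, hΦ.1]

end CombMap

/-- All bridgeless planar maps are 4-face-colorable if and only if all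
bridgeless planar cubic maps are 4-face-colorable. -/
theorem fourColor_iff_cubic_fourColor :
    (∀ M : CombMap, M.Planar → M.Bridgeless → M.FourColorable) ↔
    (∀ M : CombMap, M.Planar → M.Bridgeless → M.Cubic → M.FourColorable) := by
  refine ⟨fun h M hP hB _ => h M hP hB, fun h M hP hB => ?_⟩
  obtain ⟨Φ, hΦ⟩ :=
    h M.resolution (M.resolution_planar hP) (M.resolution_bridgeless hB) M.resolution_cubic
  exact ⟨_, hΦ.of_resolution⟩
end

section
/- A proper 4-coloring of a planar cubic map gives rise, via the three nontrivial coordinate projections Z/2 × Z/2 → Z/2, to exactly three distinct weak Hamiltonians, and these three weak Hamiltonians are pairwise related by mutation. -/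
section ZModAux
set_option synthInstance.maxSize 2000
set_option synthInstance.maxHeartbeats 1000000
set_option maxHeartbeats 4000000

abbrev V2 : Type := ZMod 2 × ZMod 2

lemma zmod_ne_iff : ∀ x y : ZMod 2, x ≠ y ↔ x + y = 1 := by decide

lemma zmod_bool_ne : ∀ x y : ZMod 2, x ≠ y → decide (x = 1) ≠ decide (y = 1) := by decide

lemma zmod_not_iff_of_ne : ∀ a b : ZMod 2, a ≠ b → ¬(a = 1 ↔ b = 1) := by decide

lemma v2_add_eq_zero : ∀ x y : V2, x + y = 0 ↔ x = y := by decide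

lemma v2_sum_cycle : ∀ a b c : V2, (a + b) + ((b + c) + (c + a)) = 0 := by decide

lemma v2_rearrange : ∀ a b c c' : V2, c' + c = (c' + b) + ((a + b) + (c + a)) := by decide

lemma lin_apply (l : V2 →ₗ[ZMod 2] ZMod 2) (x : V2) :
    l x = x.1 * l (1, 0) + x.2 * l (0, 1) := by
  have hx : x = x.1 • ((1 : ZMod 2), (0 : ZMod 2)) + x.2 • ((0 : ZMod 2), (1 : ZMod 2)) := by
    obtain ⟨a, b⟩ := x
    simp [Prod.ext_iff]
  calc l x = l (x.1 • (1, 0) + x.2 • (0, 1)) := by rw [← hx]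
    _ = x.1 * l (1, 0) + x.2 * l (0, 1) := by
        rw [map_add, map_smul, map_smul, smul_eq_mul, smul_eq_mul]

lemma lin_ext {l m : V2 →ₗ[ZMod 2] ZMod 2} (h1 : l (1,0) = m (1,0)) (h2 : l (0,1) = m (0,1)) :
    l = m :=
  LinearMap.ext fun x => by rw [lin_apply l x, lin_apply m x, h1, h2]

lemma lin_zero_iff (l : V2 →ₗ[ZMod 2] ZMod 2) : l = 0 ↔ (l (1,0) = 0 ∧ l (0,1) = 0) := by
  constructor
  · rintro rfl; simp
  · rintro ⟨h1, h2⟩; exact lin_ext (by simpa using h1) (by simpa using h2)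

lemma l_ne_of_sum (l : V2 →ₗ[ZMod 2] ZMod 2) {x y : V2} (h : l (x + y) = 1) : l x ≠ l y := by
  rw [map_add] at h
  intro he
  rw [he] at h
  revert h
  generalize l y = a
  revert a
  decide

/-- the chosen element on which `l` is nonzero -/
def lone (l : V2 →ₗ[ZMod 2] ZMod 2) : V2 :=
  if l (1,0) = 1 then ((1 : ZMod 2), (0 : ZMod 2)) else ((0 : ZMod 2), (1 : ZMod 2))

lemma lone_spec (l : V2 →ₗ[ZMod 2] ZMod 2) (hl : l ≠ 0) : lone l ≠ 0 ∧ l (lone l) = 1 := by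
  unfold lone
  by_cases h : l (1,0) = 1
  · rw [if_pos h]; exact ⟨by decide, h⟩
  · rw [if_neg h]
    refine ⟨by decide, ?_⟩
    have h1 : l (1,0) = 0 := by
      have := zmod_ne_iff (l (1,0)) 1
      rcases (by decide : ∀ a : ZMod 2, a = 0 ∨ a = 1) (l (1,0)) with h' | h'
      · exact h'
      · exact absurd h' h
    rcases (by decide : ∀ a : ZMod 2, a = 0 ∨ a = 1) (l (0,1)) with h' | h'
    · exact absurd ((lin_zero_iff l).2 ⟨h1, h'⟩) hl
    · exact h'

set_option maxHeartbeats 1000000 in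
lemma rep_two : ∀ (p q : ZMod 2) (u v w : V2),
    (¬(p = 0 ∧ q = 0) ∧ u ≠ v ∧ v ≠ w ∧ w ≠ u ∧ u ≠ 0 ∧ v ≠ 0 ∧ w ≠ 0 ∧ u + v + w = 0) →
      (u.1*p+u.2*q = 1 ∧ v.1*p+v.2*q = 1 ∧ w.1*p+w.2*q ≠ 1) ∨
      (u.1*p+u.2*q = 1 ∧ v.1*p+v.2*q ≠ 1 ∧ w.1*p+w.2*q = 1) ∨
      (u.1*p+u.2*q ≠ 1 ∧ v.1*p+v.2*q = 1 ∧ w.1*p+w.2*q = 1) := by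
  decide

set_option maxHeartbeats 4000000 in
lemma rep_one : ∀ (p q p' q' : ZMod 2) (u v w : V2),
    (¬(p = 0 ∧ q = 0) ∧ ¬(p' = 0 ∧ q' = 0) ∧ ¬(p = p' ∧ q = q') ∧
     u ≠ v ∧ v ≠ w ∧ w ≠ u ∧ u ≠ 0 ∧ v ≠ 0 ∧ w ≠ 0 ∧ u + v + w = 0) →
      ((u.1*p+u.2*q = 1 ∧ u.1*p'+u.2*q' = 1) ∧ ¬(v.1*p+v.2*q = 1 ∧ v.1*p'+v.2*q' = 1)
          ∧ ¬(w.1*p+w.2*q = 1 ∧ w.1*p'+w.2*q' = 1)) ∨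
      (¬(u.1*p+u.2*q = 1 ∧ u.1*p'+u.2*q' = 1) ∧ (v.1*p+v.2*q = 1 ∧ v.1*p'+v.2*q' = 1)
          ∧ ¬(w.1*p+w.2*q = 1 ∧ w.1*p'+w.2*q' = 1)) ∨
      (¬(u.1*p+u.2*q = 1 ∧ u.1*p'+u.2*q' = 1) ∧ ¬(v.1*p+v.2*q = 1 ∧ v.1*p'+v.2*q' = 1)
          ∧ (w.1*p+w.2*q = 1 ∧ w.1*p'+w.2*q' = 1)) := by
  decide

set_option maxHeartbeats 1000000 in
lemma rep_kernel : ∀ (p q p' q' : ZMod 2) (v : V2),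
    (v ≠ 0 ∧ v.1*p+v.2*q ≠ 1 ∧ v.1*p'+v.2*q' ≠ 1 ∧
      ¬(p = 0 ∧ q = 0) ∧ ¬(p' = 0 ∧ q' = 0)) → (p = p' ∧ q = q') := by
  decide

lemma rep_exists_ne : ∀ (p q p' q' : ZMod 2),
    ¬(p = p' ∧ q = q') → ∃ t : V2, t ≠ 0 ∧ t.1*p+t.2*q ≠ t.1*p'+t.2*q' := by
  decide

lemma rep_mem3 : ∀ (t u v w : V2),
    (t ≠ 0 ∧ u ≠ v ∧ v ≠ w ∧ w ≠ u ∧ u ≠ 0 ∧ v ≠ 0 ∧ w ≠ 0 ∧ u + v + w = 0) →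
      t = u ∨ t = v ∨ t = w := by
  decide

lemma v2_sums_good : ∀ a b c : V2, a ≠ b → b ≠ c → c ≠ a →
    (a + b ≠ b + c ∧ b + c ≠ c + a ∧ c + a ≠ a + b ∧
     a + b ≠ 0 ∧ b + c ≠ 0 ∧ c + a ≠ 0 ∧ (a+b) + (b+c) + (c+a) = 0) := by
  decide

end ZModAux

section CM
set_option synthInstance.maxSize 2000
set_option maxHeartbeats 1000000

variable {M : CombMap} {Φ : M.D → V2}

lemma phi_sigma (hΦ : M.ProperFaceColoring Φ) (d : M.D) :
    Φ (M.σ d) = Φ (M.α d) := by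
  have h := hΦ.1 (M.α d)
  have h2 : M.φ (M.α d) = M.σ d := by
    show (M.σ * M.α) (M.α d) = M.σ d
    rw [Equiv.Perm.mul_apply, M.α_invol]
  rwa [h2] at h

/-- the three darts at a vertex -/
lemma vertexDarts_eq (hC : M.Cubic) (d : M.D) :
    M.vertexDarts d = {d, M.σ d, M.σ (M.σ d)} := by
  have hσ3 : M.σ ^ (3 : ℕ) = 1 := by
    ext e
    show (M.σ ^ 3) e = e
    rw [pow_succ, pow_succ, pow_one, Equiv.Perm.mul_apply, Equiv.Perm.mul_apply]
    exact (hC e).1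
  have hz3 : M.σ ^ (3 : ℤ) = 1 := by
    rw [show (3 : ℤ) = ((3 : ℕ) : ℤ) from rfl, zpow_natCast, hσ3]
  ext e
  simp only [CombMap.vertexDarts, Set.mem_setOf_eq, Set.mem_insert_iff, Set.mem_singleton_iff]
  constructor
  · rintro ⟨i, rfl⟩
    have hdecomp : M.σ ^ i = M.σ ^ (i % 3) := by
      conv_lhs => rw [← Int.mul_ediv_add_emod i 3]
      rw [zpow_add, zpow_mul, hz3, one_zpow, one_mul]
    have h0 : 0 ≤ i % 3 := Int.emod_nonneg i (by norm_num)
    have h3 : i % 3 < 3 := Int.emod_lt_of_pos i (by norm_num)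
    rw [hdecomp]
    interval_cases h : (i % 3)
    · left; simp
    · right; left; simp
    · right; right
      rw [show (2 : ℤ) = 1 + 1 from rfl, zpow_add, zpow_one, Equiv.Perm.mul_apply]
  · rintro (rfl | rfl | rfl)
    · exact ⟨0, by simp⟩
    · exact ⟨1, by simp⟩
    · exact ⟨2, by rw [show (2 : ℤ) = 1 + 1 from rfl, zpow_add, zpow_one, Equiv.Perm.mul_apply]⟩

lemma darts_distinct (hC : M.Cubic) (d : M.D) :
    d ≠ M.σ d ∧ M.σ d ≠ M.σ (M.σ d) ∧ M.σ (M.σ d) ≠ d := by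
  refine ⟨fun h => (hC d).2 h.symm, fun h => (hC (M.σ d)).2 h.symm, fun h => ?_⟩
  have h2 : M.σ (M.σ (M.σ d)) = M.σ d := congrArg M.σ h
  rw [(hC d).1] at h2
  exact (hC d).2 h2.symm

/-- colors of the three faces around the vertex of `d` are pairwise distinct -/
lemma colors_distinct (hC : M.Cubic) (hΦ : M.ProperFaceColoring Φ) (d : M.D) :
    Φ d ≠ Φ (M.σ d) ∧ Φ (M.σ d) ≠ Φ (M.σ (M.σ d)) ∧ Φ (M.σ (M.σ d)) ≠ Φ d := by
  refine ⟨?_, ?_, ?_⟩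
  · rw [phi_sigma hΦ d]; exact hΦ.2 d
  · rw [phi_sigma hΦ (M.σ d)]; exact hΦ.2 (M.σ d)
  · have h := hΦ.2 (M.σ (M.σ d))
    rw [← phi_sigma hΦ (M.σ (M.σ d)), (hC d).1] at h
    exact h

/-- membership criterion in `H_l` via the edge color `Φ d + Φ (σ d)` -/
lemma mem_iff (hΦ : M.ProperFaceColoring Φ) (l : V2 →ₗ[ZMod 2] ZMod 2) (d : M.D) :
    (l (Φ d) ≠ l (Φ (M.α d))) ↔ l (Φ d + Φ (M.σ d)) = 1 := by
  rw [phi_sigma hΦ d, map_add, zmod_ne_iff]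

/-- `H_l` is closed under α -/
lemma edge_set_S (l : V2 →ₗ[ZMod 2] ZMod 2) (d : M.D) :
    (l (Φ d) ≠ l (Φ (M.α d))) ↔ (l (Φ (M.α d)) ≠ l (Φ (M.α (M.α d)))) := by
  rw [M.α_invol d]
  exact ne_comm

/-- the canonical dart at the vertex of `d` whose edge color is `t` -/
def pk (M : CombMap) (Φ : M.D → V2) (t : V2) (d : M.D) : M.D :=
  if Φ d + Φ (M.σ d) = t then d
  else if Φ (M.σ d) + Φ (M.σ (M.σ d)) = t then M.σ d
  else M.σ (M.σ d)

lemma pk_cases (hC : M.Cubic) (hΦ : M.ProperFaceColoring Φ) {t : V2} (ht : t ≠ 0) (d : M.D) :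
    (pk M Φ t d = d ∧ Φ d + Φ (M.σ d) = t) ∨
    (pk M Φ t d = M.σ d ∧ Φ (M.σ d) + Φ (M.σ (M.σ d)) = t) ∨
    (pk M Φ t d = M.σ (M.σ d) ∧ Φ (M.σ (M.σ d)) + Φ d = t) := by
  obtain ⟨h1, h2, h3⟩ := colors_distinct hC hΦ d
  have hg := v2_sums_good _ _ _ h1 h2 h3
  have hmem := rep_mem3 t (Φ d + Φ (M.σ d)) (Φ (M.σ d) + Φ (M.σ (M.σ d)))
      (Φ (M.σ (M.σ d)) + Φ d) ⟨ht, hg.1, hg.2.1, hg.2.2.1, hg.2.2.2.1, hg.2.2.2.2.1,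
        hg.2.2.2.2.2.1, hg.2.2.2.2.2.2⟩
  unfold pk
  by_cases hA : Φ d + Φ (M.σ d) = t
  · left; rw [if_pos hA]; exact ⟨rfl, hA⟩
  · by_cases hB : Φ (M.σ d) + Φ (M.σ (M.σ d)) = t
    · right; left; rw [if_neg hA, if_pos hB]; exact ⟨rfl, hB⟩
    · right; right
      rw [if_neg hA, if_neg hB]
      rcases hmem with h | h | h
      · exact absurd h.symm hA
      · exact absurd h.symm hB
      · exact ⟨rfl, h.symm⟩

lemma pk_sigma (hC : M.Cubic) (hΦ : M.ProperFaceColoring Φ) {t : V2} (ht : t ≠ 0) (d : M.D) :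
    pk M Φ t (M.σ d) = pk M Φ t d := by
  obtain ⟨h1, h2, h3⟩ := colors_distinct hC hΦ d
  have hg := v2_sums_good _ _ _ h1 h2 h3
  have e1 : Φ (M.σ (M.σ (M.σ d))) = Φ d := by rw [(hC d).1]
  by_cases hA : Φ d + Φ (M.σ d) = t
  · have hB : ¬ (Φ (M.σ d) + Φ (M.σ (M.σ d)) = t) := fun hB => hg.1 (hA.trans hB.symm)
    have hCc : ¬ (Φ (M.σ (M.σ d)) + Φ (M.σ (M.σ (M.σ d))) = t) := by
      rw [e1]; exact fun hc => hg.2.2.1 (hc.trans hA.symm)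
    unfold pk
    rw [if_pos hA, if_neg hB, if_neg hCc, (hC d).1]
  · by_cases hB : Φ (M.σ d) + Φ (M.σ (M.σ d)) = t
    · unfold pk
      rw [if_neg hA, if_pos hB, if_pos hB]
    · unfold pk
      have hCc : Φ (M.σ (M.σ d)) + Φ (M.σ (M.σ (M.σ d))) = t := by
        rw [e1]
        rcases rep_mem3 t (Φ d + Φ (M.σ d)) (Φ (M.σ d) + Φ (M.σ (M.σ d)))
            (Φ (M.σ (M.σ d)) + Φ d) ⟨ht, hg.1, hg.2.1, hg.2.2.1, hg.2.2.2.1, hg.2.2.2.2.1,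
              hg.2.2.2.2.2.1, hg.2.2.2.2.2.2⟩ with h | h | h
        · exact absurd h.symm hA
        · exact absurd h.symm hB
        · exact h.symm
      rw [if_neg hA, if_neg hB, if_neg hB, if_pos hCc]

lemma pk_flip (hC : M.Cubic) (hΦ : M.ProperFaceColoring Φ) (l : V2 →ₗ[ZMod 2] ZMod 2)
    (hl : l ≠ 0) (d : M.D) (hd : l (Φ d + Φ (M.σ d)) = 1) :
    l (Φ (pk M Φ (lone l) (M.α d))) ≠ l (Φ (pk M Φ (lone l) d)) := by
  obtain ⟨ht0, htl⟩ := lone_spec l hl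
  set t := lone l with htdef
  have hB' : Φ (M.α d) = Φ (M.σ d) := (phi_sigma hΦ d).symm
  have hA' : Φ (M.σ (M.α d)) = Φ d := by rw [phi_sigma hΦ (M.α d), M.α_invol]
  obtain ⟨h1, h2, h3⟩ := colors_distinct hC hΦ d
  have hg := v2_sums_good _ _ _ h1 h2 h3
  obtain ⟨h1', h2', h3'⟩ := colors_distinct hC hΦ (M.α d)
  have hg' := v2_sums_good _ _ _ h1' h2' h3'
  rcases pk_cases hC hΦ ht0 d with ⟨he, hx⟩ | ⟨he, hx⟩ | ⟨he, hx⟩ <;>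
    rcases pk_cases hC hΦ ht0 (M.α d) with ⟨he', hx'⟩ | ⟨he', hx'⟩ | ⟨he', hx'⟩
  -- case (1,1)
  · rw [he, he', hB']
    exact (l_ne_of_sum l (hd)).symm
  -- case (1,2): impossible
  · exfalso
    have hu' : Φ (M.α d) + Φ (M.σ (M.α d)) = t := by rw [hB', hA', add_comm]; exact hx
    exact hg'.1 (hu'.trans hx'.symm)
  -- case (1,3): impossible
  · exfalso
    have hu' : Φ (M.α d) + Φ (M.σ (M.α d)) = t := by rw [hB', hA', add_comm]; exact hx
    exact hg'.2.2.1 (hx'.trans hu'.symm)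
  -- case (2,1): impossible
  · exfalso
    rw [hB', hA'] at hx'
    have hu : Φ d + Φ (M.σ d) = t := by rw [add_comm]; exact hx'
    exact hg.1 (hu.trans hx.symm)
  -- case (2,2)
  · rw [he, he', hA']
    exact l_ne_of_sum l hd
  -- case (2,3)
  · rw [hB'] at hx'
    rw [he, he']
    refine l_ne_of_sum l ?_
    rw [hx', htl]
  -- case (3,1): impossible
  · exfalso
    rw [hB', hA'] at hx'
    have hu : Φ d + Φ (M.σ d) = t := by rw [add_comm]; exact hx'
    exact hg.2.2.1 (hx.trans hu.symm)
  -- case (3,2)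
  · rw [he, he', hA']
    have : l (Φ (M.σ (M.σ d)) + Φ d) = 1 := by rw [hx, htl]
    exact (l_ne_of_sum l this).symm
  -- case (3,3)
  · rw [hB'] at hx'
    rw [he, he']
    refine l_ne_of_sum l ?_
    have hre := v2_rearrange (Φ d) (Φ (M.σ d)) (Φ (M.σ (M.σ d))) (Φ (M.σ (M.σ (M.α d))))
    rw [hre, map_add, hx', htl, map_add, hd, hx, htl]
    decide

lemma inter3_eq_pair_12 {α : Type} {x y z : α} {S : Set α} (hx : x ∈ S) (hy : y ∈ S)
    (hz : z ∉ S) : ({x, y, z} : Set α) ∩ S = {x, y} := by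
  ext e
  simp only [Set.mem_inter_iff, Set.mem_insert_iff, Set.mem_singleton_iff]
  constructor
  · rintro ⟨rfl | rfl | rfl, he⟩
    · exact Or.inl rfl
    · exact Or.inr rfl
    · exact absurd he hz
  · rintro (rfl | rfl)
    · exact ⟨Or.inl rfl, hx⟩
    · exact ⟨Or.inr (Or.inl rfl), hy⟩

lemma inter3_eq_pair_13 {α : Type} {x y z : α} {S : Set α} (hx : x ∈ S) (hy : y ∉ S)
    (hz : z ∈ S) : ({x, y, z} : Set α) ∩ S = {x, z} := by
  ext e
  simp only [Set.mem_inter_iff, Set.mem_insert_iff, Set.mem_singleton_iff]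
  constructor
  · rintro ⟨rfl | rfl | rfl, he⟩
    · exact Or.inl rfl
    · exact absurd he hy
    · exact Or.inr rfl
  · rintro (rfl | rfl)
    · exact ⟨Or.inl rfl, hx⟩
    · exact ⟨Or.inr (Or.inr rfl), hz⟩

lemma inter3_eq_pair_23 {α : Type} {x y z : α} {S : Set α} (hx : x ∉ S) (hy : y ∈ S)
    (hz : z ∈ S) : ({x, y, z} : Set α) ∩ S = {y, z} := by
  ext e
  simp only [Set.mem_inter_iff, Set.mem_insert_iff, Set.mem_singleton_iff]
  constructor
  · rintro ⟨rfl | rfl | rfl, he⟩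
    · exact absurd he hx
    · exact Or.inl rfl
    · exact Or.inr rfl
  · rintro (rfl | rfl)
    · exact ⟨Or.inr (Or.inl rfl), hy⟩
    · exact ⟨Or.inr (Or.inr rfl), hz⟩

lemma inter3_eq_single_1 {α : Type} {x y z : α} {S : Set α} (hx : x ∈ S) (hy : y ∉ S)
    (hz : z ∉ S) : ({x, y, z} : Set α) ∩ S = {x} := by
  ext e
  simp only [Set.mem_inter_iff, Set.mem_insert_iff, Set.mem_singleton_iff]
  constructor
  · rintro ⟨rfl | rfl | rfl, he⟩
    · rfl
    · exact absurd he hy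
    · exact absurd he hz
  · rintro rfl
    exact ⟨Or.inl rfl, hx⟩

lemma inter3_eq_single_2 {α : Type} {x y z : α} {S : Set α} (hx : x ∉ S) (hy : y ∈ S)
    (hz : z ∉ S) : ({x, y, z} : Set α) ∩ S = {y} := by
  ext e
  simp only [Set.mem_inter_iff, Set.mem_insert_iff, Set.mem_singleton_iff]
  constructor
  · rintro ⟨rfl | rfl | rfl, he⟩
    · exact absurd he hx
    · rfl
    · exact absurd he hz
  · rintro rfl
    exact ⟨Or.inr (Or.inl rfl), hy⟩

lemma inter3_eq_single_3 {α : Type} {x y z : α} {S : Set α} (hx : x ∉ S) (hy : y ∉ S)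
    (hz : z ∈ S) : ({x, y, z} : Set α) ∩ S = {z} := by
  ext e
  simp only [Set.mem_inter_iff, Set.mem_insert_iff, Set.mem_singleton_iff]
  constructor
  · rintro ⟨rfl | rfl | rfl, he⟩
    · exact absurd he hx
    · exact absurd he hy
    · rfl
  · rintro rfl
    exact ⟨Or.inr (Or.inr rfl), hz⟩

lemma nonempty_D (M : CombMap) (hP : M.Planar) : Nonempty M.D := by
  by_contra h
  have hE : IsEmpty M.D := not_nonempty_iff.mp h
  have hz : ∀ f : Equiv.Perm M.D, numCycles f = 0 := fun f => by
    have : IsEmpty (Quotient (permSetoid f)) :=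
      ⟨fun q => Quotient.inductionOn q fun a => (hE.false a)⟩
    show Nat.card (Quotient (permSetoid f)) = 0
    exact Nat.card_of_isEmpty
  have h2 := hP.2
  rw [hz, hz, hz] at h2
  omega

lemma zmod_mut : ∀ a b : ZMod 2, ¬(a ≠ 1 ∧ b ≠ 1) → (a = 1 ↔ (¬ b = 1 ∨ (a = 1 ∧ b = 1))) := by
  decide

end CM


set_option maxHeartbeats 1000000

/-- A proper face 4-coloring of a bridgeless planar cubic map, valued in
`ℤ/2 × ℤ/2`, gives rise via the three nonzero linear functionals
`λ : ℤ/2 × ℤ/2 → ℤ/2` to three pairwise distinct weak Hamiltonians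
`H_λ = {edges across which λ ∘ Φ changes}`, pairwise related by mutation. -/
theorem coloring_gives_three_weakHams (M : CombMap) (hP : M.Planar)
    (hB : M.Bridgeless) (hC : M.Cubic) (Φ : M.D → ZMod 2 × ZMod 2)
    (hΦ : M.ProperFaceColoring Φ) :
    (∀ l : (ZMod 2 × ZMod 2) →ₗ[ZMod 2] ZMod 2, l ≠ 0 →
      M.IsWeakHamSet {d | l (Φ d) ≠ l (Φ (M.α d))}) ∧
    (∀ l m : (ZMod 2 × ZMod 2) →ₗ[ZMod 2] ZMod 2, l ≠ 0 → m ≠ 0 → l ≠ m →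
      {d | l (Φ d) ≠ l (Φ (M.α d))} ≠ {d | m (Φ d) ≠ m (Φ (M.α d))} ∧
      M.MutationSet {d | m (Φ d) ≠ m (Φ (M.α d))}
        {d | l (Φ d) ≠ l (Φ (M.α d))}) := by
  obtain ⟨d0⟩ := nonempty_D M hP
  constructor
  · -- each H_l is a weak Hamiltonian
    intro l hl
    have hmem : ∀ e : M.D, e ∈ {d | l (Φ d) ≠ l (Φ (M.α d))} ↔ l (Φ e + Φ (M.σ e)) = 1 :=
      fun e => mem_iff hΦ l e
    have hpq : ¬ (l (1,0) = 0 ∧ l (0,1) = 0) := fun h => hl ((lin_zero_iff l).2 h)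
    refine ⟨⟨fun e => ?_, fun d => ?_⟩, ?_⟩
    · -- edge set
      simp only [Set.mem_setOf_eq]
      exact edge_set_S l e
    · -- two darts of each vertex
      rw [vertexDarts_eq hC d]
      obtain ⟨h1, h2, h3⟩ := colors_distinct hC hΦ d
      have hg := v2_sums_good _ _ _ h1 h2 h3
      have h2f := rep_two (l (1,0)) (l (0,1)) (Φ d + Φ (M.σ d))
        (Φ (M.σ d) + Φ (M.σ (M.σ d))) (Φ (M.σ (M.σ d)) + Φ d)
        ⟨hpq, hg.1, hg.2.1, hg.2.2.1, hg.2.2.2.1, hg.2.2.2.2.1,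
          hg.2.2.2.2.2.1, hg.2.2.2.2.2.2⟩
      rw [← lin_apply l (Φ d + Φ (M.σ d)), ← lin_apply l (Φ (M.σ d) + Φ (M.σ (M.σ d))),
        ← lin_apply l (Φ (M.σ (M.σ d)) + Φ d)] at h2f
      have m1 := hmem d
      have m2 := hmem (M.σ d)
      have m3 := hmem (M.σ (M.σ d))
      rw [(hC d).1] at m3
      rcases h2f with ⟨ha, hb, hc⟩ | ⟨ha, hb, hc⟩ | ⟨ha, hb, hc⟩
      · rw [inter3_eq_pair_12 (m1.2 ha) (m2.2 hb) (fun hz => hc (m3.1 hz))]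
        exact Set.ncard_pair (darts_distinct hC d).1
      · rw [inter3_eq_pair_13 (m1.2 ha) (fun hz => hb (m2.1 hz)) (m3.2 hc)]
        exact Set.ncard_pair ((darts_distinct hC d).2.2).symm
      · rw [inter3_eq_pair_23 (fun hz => ha (m1.1 hz)) (m2.2 hb) (m3.2 hc)]
        exact Set.ncard_pair (darts_distinct hC d).2.1
    · -- the 2-coloring of vertices
      obtain ⟨ht0, htl⟩ := lone_spec l hl
      refine ⟨fun e => decide (l (Φ (pk M Φ (lone l) e)) = 1), fun e => ?_, fun e he => ?_⟩
      · show decide (l (Φ (pk M Φ (lone l) (M.σ e))) = 1) = decide (l (Φ (pk M Φ (lone l) e)) = 1)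
        rw [pk_sigma hC hΦ ht0 e]
      · exact zmod_bool_ne _ _ (pk_flip hC hΦ l hl e ((hmem e).1 he))
  · -- distinctness and mutation
    intro l m hl hm hlm
    have hpql : ¬ (l (1,0) = 0 ∧ l (0,1) = 0) := fun h => hl ((lin_zero_iff l).2 h)
    have hpqm : ¬ (m (1,0) = 0 ∧ m (0,1) = 0) := fun h => hm ((lin_zero_iff m).2 h)
    have hne : ¬ (l (1,0) = m (1,0) ∧ l (0,1) = m (0,1)) :=
      fun h => hlm (lin_ext h.1 h.2)
    constructor
    · -- the two weak Hamiltonians are distinct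
      obtain ⟨t, ht0, htne⟩ := rep_exists_ne (l (1,0)) (l (0,1)) (m (1,0)) (m (0,1)) hne
      rw [← lin_apply l t, ← lin_apply m t] at htne
      intro heq
      have key : ∀ e : M.D, Φ e + Φ (M.σ e) = t → False := by
        intro e hXe
        have hel : l t = 1 ↔ e ∈ {d | l (Φ d) ≠ l (Φ (M.α d))} := by
          rw [← hXe]
          exact (mem_iff hΦ l e).symm
        have hem : m t = 1 ↔ e ∈ {d | m (Φ d) ≠ m (Φ (M.α d))} := by
          rw [← hXe]
          exact (mem_iff hΦ m e).symm
        rw [heq] at hel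
        exact zmod_not_iff_of_ne _ _ htne (hel.trans hem.symm)
      obtain ⟨h1, h2, h3⟩ := colors_distinct hC hΦ d0
      have hg := v2_sums_good _ _ _ h1 h2 h3
      rcases rep_mem3 t (Φ d0 + Φ (M.σ d0)) (Φ (M.σ d0) + Φ (M.σ (M.σ d0)))
          (Φ (M.σ (M.σ d0)) + Φ d0)
          ⟨ht0, hg.1, hg.2.1, hg.2.2.1, hg.2.2.2.1, hg.2.2.2.2.1,
            hg.2.2.2.2.2.1, hg.2.2.2.2.2.2⟩ with h | h | h
      · exact key d0 h.symm
      · exact key (M.σ d0) h.symm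
      · refine key (M.σ (M.σ d0)) ?_
        rw [(hC d0).1]
        exact h.symm
    · -- mutation
      refine ⟨{d | l (Φ d) ≠ l (Φ (M.α d))} ∩ {d | m (Φ d) ≠ m (Φ (M.α d))},
        ⟨Set.inter_subset_right, fun e => ?_, fun d => ?_⟩, ?_⟩
      · -- F is a set of edges
        simp only [Set.mem_inter_iff, Set.mem_setOf_eq]
        exact and_congr (edge_set_S l e) (edge_set_S m e)
      · -- exactly one dart of F at each vertex
        rw [vertexDarts_eq hC d]
        obtain ⟨h1, h2, h3⟩ := colors_distinct hC hΦ d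
        have hg := v2_sums_good _ _ _ h1 h2 h3
        have h1f := rep_one (l (1,0)) (l (0,1)) (m (1,0)) (m (0,1)) (Φ d + Φ (M.σ d))
          (Φ (M.σ d) + Φ (M.σ (M.σ d))) (Φ (M.σ (M.σ d)) + Φ d)
          ⟨hpql, hpqm, hne, hg.1, hg.2.1, hg.2.2.1, hg.2.2.2.1, hg.2.2.2.2.1,
            hg.2.2.2.2.2.1, hg.2.2.2.2.2.2⟩
        rw [← lin_apply l (Φ d + Φ (M.σ d)), ← lin_apply l (Φ (M.σ d) + Φ (M.σ (M.σ d))),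
          ← lin_apply l (Φ (M.σ (M.σ d)) + Φ d), ← lin_apply m (Φ d + Φ (M.σ d)),
          ← lin_apply m (Φ (M.σ d) + Φ (M.σ (M.σ d))),
          ← lin_apply m (Φ (M.σ (M.σ d)) + Φ d)] at h1f
        have m1l := mem_iff hΦ l d
        have m2l := mem_iff hΦ l (M.σ d)
        have m3l := mem_iff hΦ l (M.σ (M.σ d))
        rw [(hC d).1] at m3l
        have m1m := mem_iff hΦ m d
        have m2m := mem_iff hΦ m (M.σ d)
        have m3m := mem_iff hΦ m (M.σ (M.σ d))
        rw [(hC d).1] at m3m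
        have mf : ∀ e : M.D,
            (e ∈ {d | l (Φ d) ≠ l (Φ (M.α d))} ∩ {d | m (Φ d) ≠ m (Φ (M.α d))}) ↔
            ((l (Φ e) ≠ l (Φ (M.α e))) ∧ (m (Φ e) ≠ m (Φ (M.α e)))) := fun e => Iff.rfl
        rcases h1f with ⟨ha, hb, hc⟩ | ⟨ha, hb, hc⟩ | ⟨ha, hb, hc⟩
        · rw [inter3_eq_single_1 ((mf d).2 ⟨m1l.2 ha.1, m1m.2 ha.2⟩)
            (fun hz => hb ⟨m2l.1 ((mf _).1 hz).1, m2m.1 ((mf _).1 hz).2⟩)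
            (fun hz => hc ⟨m3l.1 ((mf _).1 hz).1, m3m.1 ((mf _).1 hz).2⟩)]
          exact Set.ncard_singleton _
        · rw [inter3_eq_single_2 (fun hz => ha ⟨m1l.1 ((mf _).1 hz).1, m1m.1 ((mf _).1 hz).2⟩)
            ((mf (M.σ d)).2 ⟨m2l.2 hb.1, m2m.2 hb.2⟩)
            (fun hz => hc ⟨m3l.1 ((mf _).1 hz).1, m3m.1 ((mf _).1 hz).2⟩)]
          exact Set.ncard_singleton _
        · rw [inter3_eq_single_3 (fun hz => ha ⟨m1l.1 ((mf _).1 hz).1, m1m.1 ((mf _).1 hz).2⟩)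
            (fun hz => hb ⟨m2l.1 ((mf _).1 hz).1, m2m.1 ((mf _).1 hz).2⟩)
            ((mf (M.σ (M.σ d))).2 ⟨m3l.2 hc.1, m3m.2 hc.2⟩)]
          exact Set.ncard_singleton _
      · -- H_l = H_mᶜ ∪ F
        ext e
        simp only [Set.mem_union, Set.mem_compl_iff, Set.mem_inter_iff, Set.mem_setOf_eq]
        have hXne : Φ e + Φ (M.σ e) ≠ 0 := fun h0 =>
          (colors_distinct hC hΦ e).1 ((v2_add_eq_zero _ _).1 h0)
        rw [mem_iff hΦ l e, mem_iff hΦ m e]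
        have hk : ¬ (l (Φ e + Φ (M.σ e)) ≠ 1 ∧ m (Φ e + Φ (M.σ e)) ≠ 1) := by
          rintro ⟨ha, hb⟩
          rw [lin_apply l (Φ e + Φ (M.σ e))] at ha
          rw [lin_apply m (Φ e + Φ (M.σ e))] at hb
          exact hne (rep_kernel (l (1,0)) (l (0,1)) (m (1,0)) (m (0,1))
            (Φ e + Φ (M.σ e)) ⟨hXne, ha, hb, hpql, hpqm⟩)
        exact zmod_mut _ _ hk
end
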